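/- For every natural number k, the family of vectors u_{k,m} ∈ ℝ^{k+1}, m = 0, 1, …, k, defined by u_{k,m}(α) = 2^{−k/2} · v_{k,m}(α) / √(m!·(k−m)!), is an orthonormal basis of the Euclidean space ℝ^{k+1}; hence the dimer hopping matrix H_k is diagonalized by an orthonormal eigenbasis with H_k u_{k,m} = (2m − k) u_{k,m}. -/

import Mathlib

open Matrix

/-- The dimer hopping matrix `H_k` restricted to the `k`-particle subspace:
a `(k+1) × (k+1)` symmetric tridiagonal matrix with off-diagonal entries
`√((α+1)(k−α))`. -/
noncomputable def hopH (k : ℕ) : Matrix (Fin (k+1)) (Fin (k+1)) ℝ :=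
  fun α β =>
    if (α : ℕ) + 1 = (β : ℕ) then Real.sqrt ((((α : ℕ) + 1) * (k - (α : ℕ)) : ℕ))
    else if (β : ℕ) + 1 = (α : ℕ) then Real.sqrt ((((β : ℕ) + 1) * (k - (β : ℕ)) : ℕ))
    else 0

/-- The integer coefficient `S_{k,m}(α) = Σ_{j=0}^{m} (−1)^{k+m+α+j} C(m,j) C(k−m, α−j)`,
with the binomial coefficient taken to be `0` when the lower index is out of range. -/
def Scoef (k m α : ℕ) : ℤ :=
  ∑ j ∈ Finset.range (m+1),
    if j ≤ α then (-1 : ℤ)^(k+m+α+j) * (m.choose j) * ((k-m).choose (α - j)) else 0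

/-- The (unnormalized) eigenvector `v_{k,m}(α) = √(α!(k−α)!) · S_{k,m}(α)`. -/
noncomputable def vvec (k m : ℕ) : Fin (k+1) → ℝ :=
  fun α => Real.sqrt (((α : ℕ).factorial * (k - (α : ℕ)).factorial : ℕ)) * (Scoef k m (α : ℕ) : ℝ)

/-- The normalized eigenvector `u_{k,m} = 2^{−k/2} v_{k,m} / √(m!(k−m)!)`. -/
noncomputable def uvec (k m : ℕ) : Fin (k+1) → ℝ :=
  fun α => vvec k m α / Real.sqrt ((2 : ℝ) ^ k * (m.factorial * (k - m).factorial : ℕ))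

/-!
Up to the weights `√(α!(k-α)!)`, `Scoef k m α` is the `α`-th coefficient of the Krawtchouk
generating polynomial `Q_m = (X + 1)^m (X - 1)^(k - m)`, and those weights conjugate `H_k`
into the operator `p ↦ (1 - X²) p' + k X p`, under which `Q_m` has eigenvalue `2m - k`
because `(X + c) ((X + c)^n)' = n (X + c)^n`.

For orthonormality write `q_m(α)` for the coefficients of `Q_m`. The symmetry of
`t (x + 1) + (x - 1)` in `t` and `x` gives `C(k,m) q_m(α) = C(k,α) q_α(m)`, and substituting
`(x + 1, x - 1)` into the homogenization of `Q_m` gives `∑_α q_m(α) Q_α = 2^k X^m`. Together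
they give `∑_α α!(k-α)! q_i(α) q_j(α) = 2^k i!(k-i)! δ_ij`, and `k + 1` orthonormal vectors
span.
-/
open Polynomial

section Krawtchouk

variable (R : Type*) [CommRing R]

noncomputable def krawtchoukPoly (k m : ℕ) : R[X] := (X + 1) ^ m * (X - 1) ^ (k - m)

variable {R}

lemma coeff_X_sub_one_pow (n i : ℕ) :
    ((X - 1 : R[X]) ^ n).coeff i = (-1) ^ (n - i) * n.choose i := by
  simpa [sub_eq_add_neg] using coeff_X_add_C_pow (-1 : R) n i

lemma Scoef_eq_coeff {k m : ℕ} (hm : m ≤ k) (α : ℕ) :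
    (Scoef k m α : R) = (krawtchoukPoly R k m).coeff α := by
  rw [krawtchoukPoly, add_pow, Finset.sum_mul, finsetSum_coeff, Scoef, Int.cast_sum]
  refine Finset.sum_congr rfl fun j _ => ?_
  rw [one_pow, mul_one, mul_assoc (X ^ j), coeff_X_pow_mul', coeff_natCast_mul,
    coeff_X_sub_one_pow]
  split_ifs with hj
  · rcases le_or_gt (α - j) (k - m) with h | h
    · rw [show k + m + α + j = (k - m - (α - j)) + 2 * (m + α) by omega, pow_add, pow_mul]
      push_cast
      ring
    · simp [Nat.choose_eq_zero_of_lt h]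
  · simp

lemma X_add_C_mul_derivative_pow (c : R) (n : ℕ) :
    (X + C c) * derivative ((X + C c) ^ n) = (n : R[X]) * (X + C c) ^ n := by
  rw [derivative_X_add_C_pow, C_eq_natCast]
  cases n with
  | zero => simp
  | succ n => rw [Nat.add_sub_cancel, pow_succ]; ring

/-- Conjugating `hopH k` by the diagonal weights `√(α!(k-α)!)` turns it into this operator,
acting on coefficient vectors. -/
noncomputable def hoppingOp (k : R) (p : R[X]) : R[X] :=
  (1 - X ^ 2) * derivative p + C k * X * p

lemma hoppingOp_krawtchoukPoly {k m : ℕ} (hm : m ≤ k) :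
    hoppingOp (k : R) (krawtchoukPoly R k m) = C (2 * m - k : R) * krawtchoukPoly R k m := by
  obtain ⟨n, rfl⟩ := Nat.exists_eq_add_of_le hm
  have hA := X_add_C_mul_derivative_pow (1 : R) m
  have hB := X_add_C_mul_derivative_pow (-1 : R) n
  simp only [map_one, map_neg, ← sub_eq_add_neg] at hA hB
  rw [hoppingOp, krawtchoukPoly, Nat.add_sub_cancel_left, derivative_mul]
  simp only [map_sub, map_mul, map_natCast, map_ofNat]
  push_cast
  linear_combination (-(X - 1) * (X - 1) ^ n) * hA + (-(X + 1) * (X + 1) ^ m) * hB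

lemma coeff_hoppingOp_zero (k : R) (p : R[X]) : (hoppingOp k p).coeff 0 = p.coeff 1 := by
  simp [hoppingOp, sub_mul, coeff_derivative]

lemma coeff_hoppingOp_succ (k : R) (p : R[X]) (n : ℕ) :
    (hoppingOp k p).coeff (n + 1) = (n + 2) * p.coeff (n + 2) + (k - n) * p.coeff n := by
  rw [hoppingOp, sub_mul, one_mul, coeff_add, coeff_sub, mul_assoc, coeff_C_mul, coeff_X_mul,
    coeff_derivative, pow_two, mul_assoc, coeff_X_mul]
  cases n with
  | zero => simp; ring
  | succ n => rw [coeff_X_mul, coeff_derivative]; push_cast; ring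

lemma Scoef_recurrence_zero {k m : ℕ} (hm : m ≤ k) :
    (Scoef k m 1 : R) = (2 * m - k) * Scoef k m 0 := by
  have h := congrArg (coeff · 0) (hoppingOp_krawtchoukPoly (R := R) hm)
  simp only [coeff_hoppingOp_zero, coeff_C_mul] at h
  rw [Scoef_eq_coeff hm, Scoef_eq_coeff hm, h]

lemma Scoef_recurrence_succ {k m : ℕ} (hm : m ≤ k) (n : ℕ) :
    (n + 2) * (Scoef k m (n + 2) : R) + (k - n) * Scoef k m n
      = (2 * m - k) * Scoef k m (n + 1) := by
  have h := congrArg (coeff · (n + 1)) (hoppingOp_krawtchoukPoly (R := R) hm)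
  simp only [coeff_hoppingOp_succ, coeff_C_mul] at h
  simp only [Scoef_eq_coeff hm, h]

lemma coeff_coeff_swap (p : R[X][X]) (i j : ℕ) :
    ((Bivariate.swap p).coeff i).coeff j = (p.coeff j).coeff i := by
  induction p using Polynomial.induction_on' with
  | add p q hp hq => simp [hp, hq]
  | monomial n a =>
    rw [Bivariate.swap_monomial, coeff_mul_C, coeff_map, coeff_monomial, coeff_C_mul_X_pow]
    split_ifs <;> simp_all

lemma coeff_krawtchouk_generating (k m : ℕ) :
    ((X * C (X + 1) + C (X - 1) : R[X][X]) ^ k).coeff m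
      = k.choose m * krawtchoukPoly R k m := by
  have hterm (i : ℕ) : (X * C (X + 1)) ^ i * C (X - 1) ^ (k - i) * (k.choose i : R[X][X])
      = C (k.choose i * krawtchoukPoly R k i) * X ^ i := by
    simp only [krawtchoukPoly, mul_pow, ← C_pow, map_mul, map_natCast]
    ring
  simp only [add_pow, hterm, finsetSum_coeff, coeff_C_mul_X_pow, Finset.sum_ite_eq,
    Finset.mem_range]
  split_ifs with hm
  · rfl
  · simp [Nat.choose_eq_zero_of_lt (by omega : k < m)]

lemma choose_mul_krawtchoukPoly_coeff_comm (k m α : ℕ) :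
    k.choose m * (krawtchoukPoly R k m).coeff α
      = k.choose α * (krawtchoukPoly R k α).coeff m := by
  set F : R[X][X] := (X * C (X + 1) + C (X - 1)) ^ k
  have hF : Bivariate.swap F = F := by
    simp only [F, map_pow, map_add, map_mul, Bivariate.swap_C, Bivariate.swap_Y, map_X, map_sub,
      map_one]
    ring
  calc k.choose m * (krawtchoukPoly R k m).coeff α = (F.coeff m).coeff α := by
        rw [coeff_krawtchouk_generating, coeff_natCast_mul]
    _ = ((Bivariate.swap F).coeff α).coeff m := by rw [coeff_coeff_swap]
    _ = _ := by rw [hF, coeff_krawtchouk_generating, coeff_natCast_mul]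

lemma aeval_homogenize {A : Type*} [CommRing A] [Algebra R A] (p : R[X]) (n : ℕ)
    (x : Fin 2 → A) :
    MvPolynomial.aeval x (p.homogenize n)
      = ∑ i ∈ Finset.range (n + 1), p.coeff i • (x 0 ^ i * x 1 ^ (n - i)) := by
  simp only [homogenize, map_sum, MvPolynomial.aeval_monomial,
    Finsupp.prod_fintype _ _ (fun _ => pow_zero _), Fin.prod_univ_two,
    Finset.Nat.sum_antidiagonal_eq_sum_range_succ_mk, Algebra.smul_def]
  simp

lemma homogenize_pow (p : R[X]) {d : ℕ} (hp : p.natDegree ≤ d) (n : ℕ) :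
    (p ^ n).homogenize (n * d) = p.homogenize d ^ n := by
  induction n with
  | zero => simp
  | succ n ih =>
    rw [pow_succ, Nat.succ_mul, homogenize_mul _ _ (natDegree_pow_le_of_le n hp) hp, ih, pow_succ]

lemma homogenize_krawtchoukPoly {k m : ℕ} (hm : m ≤ k) :
    (krawtchoukPoly R k m).homogenize k
      = (.X 0 + .X 1) ^ m * (.X 0 - .X 1) ^ (k - m) := by
  have hA : (X + 1 : R[X]).natDegree ≤ 1 := by compute_degree
  have hB : (X - 1 : R[X]).natDegree ≤ 1 := by compute_degree
  obtain ⟨n, rfl⟩ := Nat.exists_eq_add_of_le hm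
  have h := homogenize_mul ((X + 1 : R[X]) ^ m) ((X - 1) ^ n)
    (natDegree_pow_le_of_le m hA) (natDegree_pow_le_of_le n hB)
  rw [homogenize_pow _ hA, homogenize_pow _ hB, mul_one, mul_one] at h
  rw [krawtchoukPoly, Nat.add_sub_cancel_left, h]
  simp

lemma sum_coeff_krawtchoukPoly_smul {A : Type*} [CommRing A] [Algebra R A] {k m : ℕ}
    (hm : m ≤ k) (a b : A) :
    ∑ α ∈ Finset.range (k + 1), (krawtchoukPoly R k m).coeff α • (a ^ α * b ^ (k - α))
      = (a + b) ^ m * (a - b) ^ (k - m) := by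
  have h := aeval_homogenize (krawtchoukPoly R k m) k ![a, b]
  rw [homogenize_krawtchoukPoly hm] at h
  simpa using h.symm

lemma sum_krawtchoukPoly_coeff_mul_coeff {k j : ℕ} (hj : j ≤ k) (i : ℕ) :
    ∑ α ∈ Finset.range (k + 1),
        (krawtchoukPoly R k j).coeff α * (krawtchoukPoly R k α).coeff i
      = if i = j then 2 ^ k else 0 := by
  have h := congrArg (coeff · i)
    (sum_coeff_krawtchoukPoly_smul (R := R) hj (X + 1 : R[X]) (X - 1))
  have h2 : ((X + 1 : R[X]) + (X - 1)) ^ j * ((X + 1) - (X - 1)) ^ (k - j)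
      = C (2 ^ k) * X ^ j := by
    rw [map_pow, map_ofNat, ← Nat.add_sub_cancel' hj, pow_add, Nat.add_sub_cancel_left]
    ring
  simp only [h2, finsetSum_coeff, coeff_smul, smul_eq_mul, coeff_C_mul_X_pow] at h
  exact h

variable [IsDomain R] [CharZero R]

lemma factorial_mul_krawtchoukPoly_coeff_comm {k m α : ℕ} (hm : m ≤ k) (hα : α ≤ k) :
    (α.factorial * (k - α).factorial : R) * (krawtchoukPoly R k m).coeff α
      = (m.factorial * (k - m).factorial : R) * (krawtchoukPoly R k α).coeff m := by
  have hk : (k.factorial : R) ≠ 0 := by exact_mod_cast k.factorial_ne_zero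
  have em : (k.factorial : R) = k.choose m * m.factorial * (k - m).factorial := by
    exact_mod_cast (Nat.choose_mul_factorial_mul_factorial hm).symm
  have eα : (k.factorial : R) = k.choose α * α.factorial * (k - α).factorial := by
    exact_mod_cast (Nat.choose_mul_factorial_mul_factorial hα).symm
  refine mul_left_cancel₀ hk ?_
  linear_combination (α.factorial * (k - α).factorial * (m.factorial * (k - m).factorial : R))
      * choose_mul_krawtchoukPoly_coeff_comm (R := R) k m α
    + (α.factorial * (k - α).factorial * (krawtchoukPoly R k m).coeff α) * em
    - (m.factorial * (k - m).factorial * (krawtchoukPoly R k α).coeff m) * eα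

lemma sum_factorial_mul_krawtchoukPoly_coeff {k i j : ℕ} (hi : i ≤ k) (hj : j ≤ k) :
    ∑ α ∈ Finset.range (k + 1), (α.factorial * (k - α).factorial : R)
        * (krawtchoukPoly R k i).coeff α * (krawtchoukPoly R k j).coeff α
      = if i = j then (2 ^ k * (i.factorial * (k - i).factorial) : R) else 0 := by
  calc _ = (i.factorial * (k - i).factorial : R) * ∑ α ∈ Finset.range (k + 1),
          (krawtchoukPoly R k j).coeff α * (krawtchoukPoly R k α).coeff i := by
        rw [Finset.mul_sum]
        refine Finset.sum_congr rfl fun α hα => ?_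
        rw [factorial_mul_krawtchoukPoly_coeff_comm hi (Finset.mem_range_succ_iff.mp hα)]
        ring
    _ = _ := by
        rw [sum_krawtchoukPoly_coeff_mul_coeff hj]
        split_ifs <;> ring

end Krawtchouk

lemma hopH_mulVec_apply {k : ℕ} (g : ℕ → ℝ) (α : Fin (k + 1)) :
    (hopH k *ᵥ fun β => g β) α
      = √(((α + 1) * (k - α) : ℕ)) * g (α + 1)
        + √((α * (k + 1 - α) : ℕ)) * g (α - 1) := by
  obtain ⟨a, ha⟩ := α
  simp only [mulVec, dotProduct, hopH]
  rw [Fin.sum_univ_eq_sum_range (fun b => (if a + 1 = b then √(((a + 1) * (k - a) : ℕ))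
    else if b + 1 = a then √(((b + 1) * (k - b) : ℕ)) else 0) * g b)]
  rw [Finset.sum_eq_add (a + 1) (a - 1) (by omega)]
  · rcases a with _ | a
    · simp
    · simp [show a + 1 + 1 ≠ a by omega]
  · intro b _ hb
    rw [if_neg (by omega), if_neg (by omega), zero_mul]
  · intro h
    simp [show k - a = 0 by simp at h; omega]
  · intro h
    simp at h; omega

lemma Scoef_eq_zero_of_lt {k m α : ℕ} (hm : m ≤ k) (hα : k < α) : Scoef k m α = 0 := by
  refine Finset.sum_eq_zero fun j hj => ?_
  rw [Finset.mem_range] at hj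
  split_ifs
  · rw [Nat.choose_eq_zero_of_lt (show k - m < α - j by omega), Nat.cast_zero, mul_zero]
  · rfl

lemma sqrt_mul_sqrt_eq_mul_sqrt {x y c z : ℝ} (hx : 0 ≤ x) (hc : 0 ≤ c)
    (h : x * y = c ^ 2 * z) :
    √x * √y = c * √z := by
  rw [← Real.sqrt_mul hx, h, Real.sqrt_mul (sq_nonneg c), Real.sqrt_sq hc]

lemma sqrt_hop_mul_sqrt_factorial_succ {k a : ℕ} (ha : a < k) :
    √(((a + 1) * (k - a) : ℕ)) * √(((a + 1).factorial * (k - (a + 1)).factorial : ℕ))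
      = (a + 1) * √((a.factorial * (k - a).factorial : ℕ)) := by
  obtain ⟨b, rfl⟩ := Nat.exists_eq_add_of_lt ha
  refine sqrt_mul_sqrt_eq_mul_sqrt (by positivity) (by positivity) ?_
  rw [show a + b + 1 - a = b + 1 by omega, show a + b + 1 - (a + 1) = b by omega]
  push_cast [Nat.factorial_succ]
  ring

lemma sqrt_hop_mul_sqrt_factorial (k a : ℕ) :
    √(((a + 1) * (k - a) : ℕ)) * √((a.factorial * (k - a).factorial : ℕ))
      = (k - a : ℕ) * √(((a + 1).factorial * (k - (a + 1)).factorial : ℕ)) := by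
  rcases lt_or_ge a k with ha | ha
  · obtain ⟨b, rfl⟩ := Nat.exists_eq_add_of_lt ha
    refine sqrt_mul_sqrt_eq_mul_sqrt (by positivity) (by positivity) ?_
    rw [show a + b + 1 - a = b + 1 by omega, show a + b + 1 - (a + 1) = b by omega]
    push_cast [Nat.factorial_succ]
    ring
  · simp [Nat.sub_eq_zero_of_le ha]

lemma hopH_mulVec_vvec {k m : ℕ} (hm : m ≤ k) :
    hopH k *ᵥ vvec k m = (2 * m - k : ℝ) • vvec k m := by
  set s : ℕ → ℝ := fun n => Scoef k m n
  set d : ℕ → ℝ := fun n => √((n.factorial * (k - n).factorial : ℕ))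
  have up (a : ℕ) :
      √(((a + 1) * (k - a) : ℕ)) * (d (a + 1) * s (a + 1)) = (a + 1) * (d a * s (a + 1)) := by
    rcases lt_or_ge a k with ha | ha
    · rw [← mul_assoc, sqrt_hop_mul_sqrt_factorial_succ ha, mul_assoc]
    · simp [s, Scoef_eq_zero_of_lt hm (Nat.lt_succ_of_le ha)]
  have down (a : ℕ) :
      √(((a + 1) * (k - a) : ℕ)) * (d a * s a) = (k - a : ℕ) * (d (a + 1) * s a) := by
    rw [← mul_assoc, sqrt_hop_mul_sqrt_factorial, mul_assoc]
  funext ⟨a, ha⟩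
  set w : ℕ → ℝ := fun n => d n * s n
  change (hopH k *ᵥ fun β : Fin (k + 1) => w β) ⟨a, ha⟩ = (2 * m - k : ℝ) * w a
  rw [hopH_mulVec_apply]
  simp only [w]
  rcases a with _ | c
  · simp only [up, zero_mul, Nat.cast_zero, Real.sqrt_zero]
    simp only [s, Scoef_recurrence_zero hm]
    ring
  · rw [up, Nat.add_sub_add_right, Nat.add_sub_cancel, down, Nat.cast_sub (by omega)]
    push_cast
    linear_combination d (c + 1) * Scoef_recurrence_succ (R := ℝ) hm c

lemma uvec_eq_smul (k m : ℕ) :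
    uvec k m
      = (√((2 : ℝ) ^ k * (m.factorial * (k - m).factorial : ℕ)))⁻¹ • vvec k m := by
  funext α
  exact div_eq_inv_mul _ _

lemma hopH_mulVec_uvec {k m : ℕ} (hm : m ≤ k) :
    hopH k *ᵥ uvec k m = (2 * m - k : ℝ) • uvec k m := by
  rw [uvec_eq_smul, mulVec_smul, hopH_mulVec_vvec hm, smul_comm]

lemma vvec_dotProduct_vvec {k i j : ℕ} (hi : i ≤ k) (hj : j ≤ k) :
    vvec k i ⬝ᵥ vvec k j
      = if i = j then (2 : ℝ) ^ k * (i.factorial * (k - i).factorial : ℕ) else 0 := by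
  have hterm (α : ℕ) : √((α.factorial * (k - α).factorial : ℕ)) * (Scoef k i α : ℝ)
      * (√((α.factorial * (k - α).factorial : ℕ)) * (Scoef k j α : ℝ))
      = (α.factorial * (k - α).factorial : ℝ) * (krawtchoukPoly ℝ k i).coeff α
        * (krawtchoukPoly ℝ k j).coeff α := by
    rw [Scoef_eq_coeff hi, Scoef_eq_coeff hj, mul_mul_mul_comm, Real.mul_self_sqrt (by positivity)]
    push_cast
    ring
  simp only [dotProduct, vvec, hterm]
  rw [Fin.sum_univ_eq_sum_range (fun α => (α.factorial * (k - α).factorial : ℝ)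
    * (krawtchoukPoly ℝ k i).coeff α * (krawtchoukPoly ℝ k j).coeff α),
    sum_factorial_mul_krawtchoukPoly_coeff hi hj]
  push_cast
  rfl

lemma orthonormal_uvec (k : ℕ) :
    Orthonormal ℝ (fun m : Fin (k + 1) =>
      (WithLp.equiv 2 (Fin (k + 1) → ℝ)).symm (uvec k m)) := by
  rw [orthonormal_iff_ite]
  intro i j
  rw [EuclideanSpace.inner_eq_star_dotProduct]
  simp only [WithLp.equiv_symm_apply, star_trivial, uvec_eq_smul, dotProduct_smul, smul_dotProduct,
    vvec_dotProduct_vvec (Nat.lt_succ_iff.mp j.isLt) (Nat.lt_succ_iff.mp i.isLt), Fin.ext_iff]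
  by_cases h : (i : ℕ) = j
  · rw [if_pos h.symm, if_pos h, h, smul_smul, ← mul_inv, Real.mul_self_sqrt (by positivity),
      smul_eq_mul, inv_mul_cancel₀ (by positivity)]
  · rw [if_neg (Ne.symm h), if_neg h, smul_zero, smul_zero]

/-- The family `u_{k,m}`, `m = 0, …, k`, is an orthonormal basis of the Euclidean space
`ℝ^{k+1}` (an orthonormal family whose span is everything), and `H_k` is diagonalized by
it: `H_k u_{k,m} = (2m − k) u_{k,m}`. -/
theorem uvec_orthonormal_basis (k : ℕ) :
    Orthonormal ℝ (fun m : Fin (k+1) =>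
        (WithLp.equiv 2 (Fin (k+1) → ℝ)).symm (uvec k (m : ℕ))) ∧
    Submodule.span ℝ (Set.range (fun m : Fin (k+1) =>
        (WithLp.equiv 2 (Fin (k+1) → ℝ)).symm (uvec k (m : ℕ)))) = ⊤ ∧
    ∀ m : Fin (k+1),
      hopH k *ᵥ uvec k (m : ℕ) = (2 * ((m : ℕ) : ℝ) - (k : ℝ)) • uvec k (m : ℕ) := by
  have hON := orthonormal_uvec k
  exact ⟨hON, hON.linearIndependent.span_eq_top_of_card_eq_finrank (by simp),
    fun m => hopH_mulVec_uvec (Nat.lt_succ_iff.mp m.isLt)⟩
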